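/- arXiv:2102.11184 — 6 statements merged into one kernel-verified Lean document; each statement's English description precedes it below -/
import Mathlib

section
/- For every QLTL formula in prenex normal form φ = ℘ψ (where ℘ is a quantifier prefix and ψ is quantifier-free LTL) and every interpretation π : ℕ → 2^F over the free variables F of φ, π satisfies φ under the classic semantics if and only if π satisfies φ under the Skolem semantics, i.e., iff there exists a Skolem function θ over (℘, F) such that for every interpretation π' of the universally quantified variables, θ(π ⊎ π') classically satisfies ψ. -/
/-- LTL formulas over a set of propositional variables. -/
inductive LTL (V : Type) where
  | var (v : V)
  | not (φ : LTL V)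
  | or (φ ψ : LTL V)
  | and (φ ψ : LTL V)
  | next (φ : LTL V)
  | untl (φ ψ : LTL V)

/-- Variables occurring in an LTL formula. -/
def varsLTL {V : Type} : LTL V → Set V
  | .var v => {v}
  | .not φ => varsLTL φ
  | .or φ ψ => varsLTL φ ∪ varsLTL ψ
  | .and φ ψ => varsLTL φ ∪ varsLTL ψ
  | .next φ => varsLTL φ
  | .untl φ ψ => varsLTL φ ∪ varsLTL ψ

/-- Classic LTL satisfaction `π, i ⊨ φ`. -/
def ltlSat {V : Type} (π : ℕ → Set V) : ℕ → LTL V → Prop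
  | i, .var v => v ∈ π i
  | i, .not φ => ¬ ltlSat π i φ
  | i, .or φ ψ => ltlSat π i φ ∨ ltlSat π i ψ
  | i, .and φ ψ => ltlSat π i φ ∧ ltlSat π i ψ
  | i, .next φ => ltlSat π (i + 1) φ
  | i, .untl φ ψ => ∃ j, i ≤ j ∧ ltlSat π j ψ ∧ ∀ k, i ≤ k → k < j → ltlSat π k φ

/-- A quantifier prefix: a list of (quantifier, variable), `true` = ∃, `false` = ∀. -/
abbrev QPrefix (V : Type) := List (Bool × V)

/-- Classic semantics of a prenex QLTL formula `℘ ψ` over interpretation `π`. -/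
def satC {V : Type} : QPrefix V → LTL V → (ℕ → Set V) → Prop
  | [], ψ, π => ltlSat π 0 ψ
  | (true, x) :: p, ψ, π =>
      ∃ π' : ℕ → Set V, (∀ i, ∀ v, v ≠ x → (v ∈ π' i ↔ v ∈ π i)) ∧ satC p ψ π'
  | (false, x) :: p, ψ, π =>
      ∀ π' : ℕ → Set V, (∀ i, ∀ v, v ≠ x → (v ∈ π' i ↔ v ∈ π i)) → satC p ψ π'

/-- Universally quantified variables of a prefix. -/
def univVars {V : Type} (p : QPrefix V) : Set V := {v | (false, v) ∈ p}

/-- Existentially quantified variables of a prefix. -/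
def exVars {V : Type} (p : QPrefix V) : Set V := {v | (true, v) ∈ p}

/-- `dep p y`: the universally quantified variables occurring before `y` in `p`. -/
def dep {V : Type} [DecidableEq V] : QPrefix V → V → Set V
  | [], _ => ∅
  | (true, x) :: p, y => if x = y then ∅ else dep p y
  | (false, x) :: p, y => if x = y then ∅ else insert x (dep p y)

/-- Combine two interpretations: take `π₁` on `S` and `π₂` elsewhere. -/
def assign {V : Type} (S : Set V) (π₁ π₂ : ℕ → Set V) : ℕ → Set V :=
  fun i => {v | (v ∈ S ∧ v ∈ π₁ i) ∨ (v ∉ S ∧ v ∈ π₂ i)}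

/-- Interpretation feeding a Skolem function: universally quantified variables are
taken from `πu`, the others (the free ones) from `π`. -/
def inputOf {V : Type} (p : QPrefix V) (π πu : ℕ → Set V) : ℕ → Set V :=
  assign (univVars p) πu π

/-- Full interpretation: existential variables from the Skolem function `θ`,
the rest from the input. -/
def fullOf {V : Type} (p : QPrefix V) (θ : (ℕ → Set V) → (ℕ → Set V))
    (π πu : ℕ → Set V) : ℕ → Set V :=
  assign (exVars p) (θ (inputOf p π πu)) (inputOf p π πu)

/-- Skolem function over `(p, F)`: the `y`-component of the output depends only
on the restriction of the input to `Dep^F(y) = F ∪ dep p y`. -/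
def IsSkolem {V : Type} [DecidableEq V] (F : Set V) (p : QPrefix V)
    (θ : (ℕ → Set V) → (ℕ → Set V)) : Prop :=
  ∀ π₁ π₂ : ℕ → Set V, ∀ y ∈ exVars p,
    (∀ i, ∀ v ∈ F ∪ dep p y, (v ∈ π₁ i ↔ v ∈ π₂ i)) →
    ∀ i, (y ∈ θ π₁ i ↔ y ∈ θ π₂ i)

/-- Behavioral condition: the `y`-component at instant `k` depends only on the
prefix up to `k` of the input restricted to `Dep^F(y)`. -/
def IsBehavioral {V : Type} [DecidableEq V] (F : Set V) (p : QPrefix V)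
    (θ : (ℕ → Set V) → (ℕ → Set V)) : Prop :=
  ∀ π₁ π₂ : ℕ → Set V, ∀ y ∈ exVars p, ∀ k : ℕ,
    (∀ i ≤ k, ∀ v ∈ F ∪ dep p y, (v ∈ π₁ i ↔ v ∈ π₂ i)) →
    (y ∈ θ π₁ k ↔ y ∈ θ π₂ k)

/-- Skolem semantics: `π ⊨_S ℘ ψ`. -/
def satS {V : Type} [DecidableEq V] (F : Set V) (p : QPrefix V) (ψ : LTL V)
    (π : ℕ → Set V) : Prop :=
  ∃ θ : (ℕ → Set V) → (ℕ → Set V), IsSkolem F p θ ∧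
    ∀ πu : ℕ → Set V, ltlSat (fullOf p θ π πu) 0 ψ

/-- Behavioral semantics: `π ⊨_B ℘ ψ`. -/
def satB {V : Type} [DecidableEq V] (F : Set V) (p : QPrefix V) (ψ : LTL V)
    (π : ℕ → Set V) : Prop :=
  ∃ θ : (ℕ → Set V) → (ℕ → Set V), IsSkolem F p θ ∧ IsBehavioral F p θ ∧
    ∀ πu : ℕ → Set V, ltlSat (fullOf p θ π πu) 0 ψ

section Aux

variable {V : Type}

/-- The free variables of the prenex formula `p ψ`. -/
def freeOf (p : QPrefix V) (ψ : LTL V) : Set V :=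
  {v | v ∈ varsLTL ψ ∧ (true, v) ∉ p ∧ (false, v) ∉ p}

lemma interp_eq {π₁ π₂ : ℕ → Set V} (h : ∀ i v, v ∈ π₁ i ↔ v ∈ π₂ i) : π₁ = π₂ :=
  funext fun i => Set.ext fun v => h i v

lemma mem_assign {S : Set V} {a b : ℕ → Set V} {i : ℕ} {v : V} :
    v ∈ assign S a b i ↔ (v ∈ S ∧ v ∈ a i) ∨ (v ∉ S ∧ v ∈ b i) := Iff.rfl

lemma mem_inputOf {p : QPrefix V} {π πu : ℕ → Set V} {i : ℕ} {v : V} :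
    v ∈ inputOf p π πu i ↔ (v ∈ univVars p ∧ v ∈ πu i) ∨ (v ∉ univVars p ∧ v ∈ π i) :=
  Iff.rfl

lemma main_aux [DecidableEq V] (ψ : LTL V) :
    ∀ p : QPrefix V, (p.map Prod.snd).Nodup →
    ∀ π, satC p ψ π ↔ satS (freeOf p ψ) p ψ π := by
  intro p
  induction p with
  | nil =>
    intro _ π
    have hfull : ∀ θ πu, fullOf ([] : QPrefix V) θ π πu = π := by
      intro θ πu
      apply interp_eq; intro i v
      simp [fullOf, mem_assign, mem_inputOf, exVars, univVars]
    constructor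
    · intro h
      refine ⟨id, ?_, fun πu => by rw [hfull]; exact h⟩
      intro ρ₁ ρ₂ y hy
      exact absurd hy (by simp [exVars])
    · rintro ⟨θ, _, hs⟩
      have := hs (fun _ => ∅)
      rwa [hfull] at this
  | cons hd tl ih =>
    obtain ⟨b, x⟩ := hd
    intro hnd π
    rw [List.map_cons, List.nodup_cons] at hnd
    obtain ⟨hx, hnd'⟩ := hnd
    have hxmem : ∀ b', (b', x) ∉ tl := fun b' h => hx (List.mem_map.mpr ⟨(b', x), h, rfl⟩)
    have hxE : x ∉ exVars tl := fun h => hxmem true h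
    have hxU : x ∉ univVars tl := fun h => hxmem false h
    have ihtl := ih hnd'
    cases b with
    | true =>
      have hexp : ∀ v : V, v ∈ exVars ((true, x) :: tl) ↔ v = x ∨ v ∈ exVars tl := by
        intro v; simp [exVars, List.mem_cons]
      have hxexp : x ∈ exVars ((true, x) :: tl) := (hexp x).mpr (Or.inl rfl)
      have hunp : ∀ v : V, v ∈ univVars ((true, x) :: tl) ↔ v ∈ univVars tl := by
        intro v; simp [univVars, List.mem_cons]
      have hxunp : x ∉ univVars ((true, x) :: tl) := fun h => hxU ((hunp x).mp h)
      have hdep : ∀ y : V, y ≠ x → dep ((true, x) :: tl) y = dep tl y := by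
        intro y hy
        simp only [dep]
        rw [if_neg (show ¬ x = y from fun h => hy h.symm)]
      have hdepx : dep ((true, x) :: tl) x = (∅ : Set V) := by simp [dep]
      have hFsub : freeOf ((true, x) :: tl) ψ ⊆ freeOf tl ψ := by
        rintro v ⟨h1, h2, h3⟩
        exact ⟨h1, fun h => h2 (List.mem_cons_of_mem _ h),
          fun h => h3 (List.mem_cons_of_mem _ h)⟩
      have hF'sub : ∀ v ∈ freeOf tl ψ, v ≠ x → v ∈ freeOf ((true, x) :: tl) ψ := by
        rintro v ⟨h1, h2, h3⟩ hvx
        refine ⟨h1, ?_, ?_⟩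
        · intro h; rcases List.mem_cons.mp h with h | h
          · exact hvx (congrArg Prod.snd h)
          · exact h2 h
        · intro h; rcases List.mem_cons.mp h with h | h
          · exact absurd (congrArg Prod.fst h) (by simp)
          · exact h3 h
      have hFnu : ∀ v ∈ freeOf ((true, x) :: tl) ψ, v ∉ univVars ((true, x) :: tl) := by
        rintro v ⟨_, _, h3⟩ hv; exact h3 hv
      constructor
      · -- classic → skolem
        rintro ⟨π', hag, hsatC⟩
        obtain ⟨θ', hSk', hS'⟩ := (ihtl π').mp hsatC
        refine ⟨fun ρ i => {v | (v = x ∧ v ∈ π' i) ∨ (v ≠ x ∧ v ∈ θ' (assign {x} π' ρ) i)},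
          ?_, ?_⟩
        · intro ρ₁ ρ₂ y hy hagr i
          by_cases hyx : y = x
          · simp [Set.mem_setOf_eq, hyx]
          · have hyE : y ∈ exVars tl := ((hexp y).mp hy).resolve_left hyx
            have hkey := hSk' (assign {x} π' ρ₁) (assign {x} π' ρ₂) y hyE ?_ i
            · simp only [Set.mem_setOf_eq]
              constructor
              · rintro (⟨h1, h2⟩ | ⟨h1, h2⟩)
                · exact absurd h1 hyx
                · exact Or.inr ⟨h1, hkey.mp h2⟩
              · rintro (⟨h1, h2⟩ | ⟨h1, h2⟩)
                · exact absurd h1 hyx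
                · exact Or.inr ⟨h1, hkey.mpr h2⟩
            · intro j v hv
              by_cases hvx : v = x
              · simp [mem_assign, hvx]
              · have hv' : v ∈ freeOf ((true, x) :: tl) ψ ∪ dep ((true, x) :: tl) y := by
                  rw [hdep y hyx]
                  rcases hv with hv | hv
                  · exact Or.inl (hF'sub v hv hvx)
                  · exact Or.inr hv
                have h2 := hagr j v hv'
                simpa [mem_assign, hvx] using h2
        · intro πu
          have hkey : assign {x} π' (inputOf ((true, x) :: tl) π πu) = inputOf tl π' πu := by
            apply interp_eq; intro i v
            by_cases hvx : v = x
            · simp [mem_assign, mem_inputOf, hvx, hxU]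
            · simp only [mem_assign, mem_inputOf, Set.mem_singleton_iff, hvx,
                false_and, false_or, not_false_iff, true_and, hunp v]
              rw [show (v ∈ π i) = (v ∈ π' i) from propext (hag i v hvx).symm]
          have heq : fullOf ((true, x) :: tl)
              (fun ρ i => {v | (v = x ∧ v ∈ π' i) ∨ (v ≠ x ∧ v ∈ θ' (assign {x} π' ρ) i)})
              π πu = fullOf tl θ' π' πu := by
            apply interp_eq; intro i v
            simp only [fullOf, mem_assign, Set.mem_setOf_eq]
            rw [hkey]
            by_cases hvx : v = x
            · have h2 : x ∈ inputOf tl π' πu i ↔ x ∈ π' i := by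
                simp [mem_inputOf, hxU]
              rw [hvx]
              constructor
              · rintro (⟨_, (⟨_, h⟩ | ⟨h, _⟩)⟩ | ⟨h, _⟩)
                · exact Or.inr ⟨hxE, h2.mpr h⟩
                · exact absurd rfl h
                · exact absurd hxexp h
              · rintro (⟨h, _⟩ | ⟨_, h⟩)
                · exact absurd h hxE
                · exact Or.inl ⟨hxexp, Or.inl ⟨rfl, h2.mp h⟩⟩
            · have h3 : v ∈ inputOf ((true, x) :: tl) π πu i ↔
                  v ∈ inputOf tl π' πu i := by
                simp only [mem_inputOf, hunp v]
                rw [show (v ∈ π i) = (v ∈ π' i) from propext (hag i v hvx).symm]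
              simp only [hexp v, hvx, false_and, false_or, not_false_iff, true_and,
                ne_eq, h3, or_false]
          rw [heq]
          exact hS' πu
      · -- skolem → classic
        rintro ⟨θ, hSk, hS⟩
        set π' : ℕ → Set V :=
          fun i => {v | (v = x ∧ v ∈ θ (inputOf ((true, x) :: tl) π π) i) ∨ (v ≠ x ∧ v ∈ π i)}
          with hπ'
        have hag : ∀ i, ∀ v, v ≠ x → (v ∈ π' i ↔ v ∈ π i) := by
          intro i v hvx; simp [hπ', Set.mem_setOf_eq, hvx]
        refine ⟨π', hag, (ihtl π').mpr ⟨fun ρ => θ (assign {x} π ρ), ?_, ?_⟩⟩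
        · intro ρ₁ ρ₂ y hy hagr i
          have hyx : y ≠ x := fun h => hxE (h ▸ hy)
          have hyp : y ∈ exVars ((true, x) :: tl) := (hexp y).mpr (Or.inr hy)
          apply hSk (assign {x} π ρ₁) (assign {x} π ρ₂) y hyp ?_ i
          intro j v hv
          by_cases hvx : v = x
          · simp [mem_assign, hvx]
          · have hv' : v ∈ freeOf tl ψ ∪ dep tl y := by
              rw [hdep y hyx] at hv
              rcases hv with hv | hv
              · exact Or.inl (hFsub hv)
              · exact Or.inr hv
            have h2 := hagr j v hv'
            simpa [mem_assign, hvx] using h2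
        · intro πu
          have hρeq : assign {x} π (inputOf tl π' πu) = inputOf ((true, x) :: tl) π πu := by
            apply interp_eq; intro i v
            by_cases hvx : v = x
            · simp [mem_assign, mem_inputOf, hvx, hxU, hunp x]
            · simp only [mem_assign, mem_inputOf, Set.mem_singleton_iff, hvx,
                false_and, false_or, not_false_iff, true_and, hunp v]
              rw [show (v ∈ π' i) = (v ∈ π i) from propext (hag i v hvx)]
          have hxcomp : ∀ i, (x ∈ θ (inputOf ((true, x) :: tl) π π) i ↔
              x ∈ θ (inputOf ((true, x) :: tl) π πu) i) := by
            intro i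
            apply hSk _ _ x hxexp ?_ i
            intro j v hv
            rw [hdepx] at hv
            rcases hv with hv | hv
            · have hvnu := hFnu v hv
              simp [mem_inputOf, hvnu]
            · exact absurd hv (Set.notMem_empty v)
          have heq : fullOf tl (fun ρ => θ (assign {x} π ρ)) π' πu =
              fullOf ((true, x) :: tl) θ π πu := by
            apply interp_eq; intro i v
            simp only [fullOf, mem_assign]
            rw [hρeq]
            by_cases hvx : v = x
            · have hmem : x ∈ π' i ↔ x ∈ θ (inputOf ((true, x) :: tl) π πu) i := by
                simp only [hπ', Set.mem_setOf_eq]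
                constructor
                · rintro (⟨_, h⟩ | ⟨h, _⟩)
                  · exact (hxcomp i).mp h
                  · exact absurd rfl h
                · intro h
                  exact Or.inl ⟨trivial, (hxcomp i).mpr h⟩
              have h2 : x ∈ inputOf tl π' πu i ↔ x ∈ π' i := by
                simp [mem_inputOf, hxU]
              rw [hvx]
              constructor
              · rintro (⟨h, _⟩ | ⟨_, h⟩)
                · exact absurd h hxE
                · exact Or.inl ⟨hxexp, hmem.mp (h2.mp h)⟩
              · rintro (⟨_, h⟩ | ⟨h, _⟩)
                · exact Or.inr ⟨hxE, h2.mpr (hmem.mpr h)⟩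
                · exact absurd hxexp h
            · have h3 : v ∈ inputOf tl π' πu i ↔
                  v ∈ inputOf ((true, x) :: tl) π πu i := by
                simp only [mem_inputOf, hunp v]
                rw [show (v ∈ π' i) = (v ∈ π i) from propext (hag i v hvx)]
              simp only [hexp v, hvx, false_or, h3]
          rw [heq]
          exact hS πu
    | false =>
      have hexp : ∀ v : V, v ∈ exVars ((false, x) :: tl) ↔ v ∈ exVars tl := by
        intro v; simp [exVars, List.mem_cons]
      have hunp : ∀ v : V, v ∈ univVars ((false, x) :: tl) ↔ v = x ∨ v ∈ univVars tl := by
        intro v; simp [univVars, List.mem_cons]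
      have hxunp : x ∈ univVars ((false, x) :: tl) := (hunp x).mpr (Or.inl rfl)
      have hdep : ∀ y : V, y ≠ x →
          dep ((false, x) :: tl) y = insert x (dep tl y) := by
        intro y hy
        simp only [dep]
        rw [if_neg (show ¬ x = y from fun h => hy h.symm)]
      have hFsub : freeOf ((false, x) :: tl) ψ ⊆ freeOf tl ψ := by
        rintro v ⟨h1, h2, h3⟩
        exact ⟨h1, fun h => h2 (List.mem_cons_of_mem _ h),
          fun h => h3 (List.mem_cons_of_mem _ h)⟩
      have hF'sub : ∀ v ∈ freeOf tl ψ, v ≠ x → v ∈ freeOf ((false, x) :: tl) ψ := by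
        rintro v ⟨h1, h2, h3⟩ hvx
        refine ⟨h1, ?_, ?_⟩
        · intro h; rcases List.mem_cons.mp h with h | h
          · exact absurd (congrArg Prod.fst h) (by simp)
          · exact h2 h
        · intro h; rcases List.mem_cons.mp h with h | h
          · exact hvx (congrArg Prod.snd h)
          · exact h3 h
      constructor
      · -- classic → skolem
        intro hsatC
        classical
        have hall : ∀ ρ : ℕ → Set V, satS (freeOf tl ψ) tl ψ (assign {x} ρ π) := by
          intro ρ
          refine (ihtl _).mp (hsatC _ ?_)
          intro i v hvx; simp [mem_assign, hvx]
        set Θ : (ℕ → Set V) → (ℕ → Set V) → (ℕ → Set V) :=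
          fun τ => if h : satS (freeOf tl ψ) tl ψ τ then h.choose else id with hΘdef
        have hΘ : ∀ τ, (h : satS (freeOf tl ψ) tl ψ τ) →
            IsSkolem (freeOf tl ψ) tl (Θ τ) ∧
            ∀ πu, ltlSat (fullOf tl (Θ τ) τ πu) 0 ψ := by
          intro τ h
          have hτ : Θ τ = h.choose := by rw [hΘdef]; exact dif_pos h
          rw [hτ]
          exact h.choose_spec
        refine ⟨fun ρ => Θ (assign {x} ρ π) ρ, ?_, ?_⟩
        · intro ρ₁ ρ₂ y hy hagr i
          have hyE : y ∈ exVars tl := (hexp y).mp hy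
          have hyx : y ≠ x := fun h => hxE (h ▸ hyE)
          have hxdep : x ∈ dep ((false, x) :: tl) y := by
            rw [hdep y hyx]; exact Set.mem_insert _ _
          have hσeq : assign {x} ρ₁ π = assign {x} ρ₂ π := by
            apply interp_eq; intro j v
            by_cases hvx : v = x
            · have h := hagr j x (Or.inr hxdep)
              simp only [hvx]
              simpa [mem_assign] using h
            · simp [mem_assign, hvx]
          show y ∈ Θ (assign {x} ρ₁ π) ρ₁ i ↔ y ∈ Θ (assign {x} ρ₂ π) ρ₂ i
          rw [hσeq]
          apply (hΘ _ (hall ρ₂)).1 ρ₁ ρ₂ y hyE ?_ i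
          intro j v hv
          by_cases hvx : v = x
          · rw [hvx]; exact hagr j x (Or.inr hxdep)
          · rcases hv with hv | hv
            · exact hagr j v (Or.inl (hF'sub v hv hvx))
            · exact hagr j v (Or.inr (by rw [hdep y hyx]; exact Set.mem_insert_of_mem _ hv))
        · intro πu
          have hρ₀ : inputOf tl (assign {x} (inputOf ((false, x) :: tl) π πu) π) πu =
              inputOf ((false, x) :: tl) π πu := by
            apply interp_eq; intro i v
            by_cases hvx : v = x
            · simp only [hvx, mem_inputOf, mem_assign, hxU, false_and, false_or,
                not_false_iff, true_and, Set.mem_singleton_iff]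
              tauto
            · simp only [mem_inputOf, mem_assign, Set.mem_singleton_iff, hvx,
                false_and, false_or, not_false_iff, true_and, hunp v]
          have heq : fullOf ((false, x) :: tl) (fun ρ => Θ (assign {x} ρ π) ρ) π πu =
              fullOf tl (Θ (assign {x} (inputOf ((false, x) :: tl) π πu) π))
                (assign {x} (inputOf ((false, x) :: tl) π πu) π) πu := by
            apply interp_eq; intro i v
            simp only [fullOf, mem_assign]
            rw [hρ₀]
            simp only [hexp v]
          rw [heq]
          exact (hΘ _ (hall _)).2 πu
      · -- skolem → classic
        rintro ⟨θ, hSk, hS⟩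
        intro π' hag
        refine (ihtl π').mpr ⟨fun ρ => θ (assign {x} π' ρ), ?_, ?_⟩
        · intro ρ₁ ρ₂ y hy hagr i
          have hyx : y ≠ x := fun h => hxE (h ▸ hy)
          apply hSk (assign {x} π' ρ₁) (assign {x} π' ρ₂) y ((hexp y).mpr hy) ?_ i
          intro j v hv
          by_cases hvx : v = x
          · simp [mem_assign, hvx]
          · rcases hv with hv | hv
            · have h2 := hagr j v (Or.inl (hFsub hv))
              simpa [mem_assign, hvx] using h2
            · rw [hdep y hyx] at hv
              rcases hv with hv | hv
              · exact absurd hv hvx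
              · have h2 := hagr j v (Or.inr hv)
                simpa [mem_assign, hvx] using h2
        · intro πu
          have hfix : inputOf ((false, x) :: tl) π (inputOf tl π' πu) =
              inputOf tl π' πu := by
            apply interp_eq; intro i v
            by_cases hvx : v = x
            · simp only [hvx, mem_inputOf, hunp x, hxU]
              tauto
            · simp only [mem_inputOf, hunp v, hvx, false_or]
              by_cases hvu : v ∈ univVars tl
              · simp [hvu]
              · simp only [hvu, false_and, false_or, not_false_iff, true_and]
                rw [show (v ∈ π' i) = (v ∈ π i) from propext (hag i v hvx)]
          have hassign : assign {x} π' (inputOf tl π' πu) = inputOf tl π' πu := by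
            apply interp_eq; intro i v
            by_cases hvx : v = x
            · simp [hvx, mem_assign, mem_inputOf, hxU]
            · simp [mem_assign, hvx]
          have heq : fullOf tl (fun ρ => θ (assign {x} π' ρ)) π' πu =
              fullOf ((false, x) :: tl) θ π (inputOf tl π' πu) := by
            apply interp_eq; intro i v
            simp only [fullOf, mem_assign]
            rw [hfix, hassign]
            simp only [hexp v]
          rw [heq]
          exact hS (inputOf tl π' πu)

end Aux

/-- classic semantics coincides with Skolem semantics for prenex QLTL. -/
theorem classic_iff_skolem {V : Type} [DecidableEq V]
    (p : QPrefix V) (ψ : LTL V) (F : Set V)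
    (hnd : (p.map Prod.snd).Nodup)
    (hF : ∀ v, v ∈ F ↔ (v ∈ varsLTL ψ ∧ (true, v) ∉ p ∧ (false, v) ∉ p))
    (π : ℕ → Set V) :
    satC p ψ π ↔ satS F p ψ π := by
  have hFeq : F = freeOf p ψ := Set.ext fun v => hF v
  rw [hFeq]
  exact main_aux ψ p hnd π
end

section
/- The QLTL formula ∀x ∃y (G x ↔ y) is not satisfiable under the behavioral semantics: there is no behavioral Skolem function θ mapping each infinite x-trace to a y-trace, with θ's value at each instant k depending only on the x-values at instants 0..k, such that for every x-trace π, y holds at instant 0 of θ(π) iff x holds at all instants of π. -/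
/-- `∀x ∃y (G x ↔ y)` is not behaviorally satisfiable: no
behavioral Skolem function (whose output at instant k depends only on the
input at instants 0..k) can witness it. -/
theorem not_behavioral_sat_Gx_iff_y :
    ¬ ∃ θ : (ℕ → Bool) → (ℕ → Bool),
      (∀ π₁ π₂ : ℕ → Bool, ∀ k : ℕ, (∀ i ≤ k, π₁ i = π₂ i) → θ π₁ k = θ π₂ k) ∧
      (∀ π : ℕ → Bool, (θ π 0 = true ↔ ∀ i : ℕ, π i = true)) := by
  rintro ⟨θ, hbeh, hsat⟩
  set π₁ : ℕ → Bool := fun _ => true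
  set π₂ : ℕ → Bool := fun i => decide (i = 0)
  have hagree : ∀ i ≤ 0, π₁ i = π₂ i := by
    intro i hi
    interval_cases i
    simp [π₁, π₂]
  have heq := hbeh π₁ π₂ 0 hagree
  have h1 : θ π₁ 0 = true := (hsat π₁).mpr (fun i => rfl)
  have h2 : θ π₂ 0 ≠ true := by
    intro h
    have := (hsat π₂).mp h 1
    simp [π₂] at this
  exact h2 (heq ▸ h1)
end

section
/- The QLTL formula ∀x ∃y (G x ↔ y) is also not satisfiable under the weak-behavioral semantics: there is no function θ mapping x-traces to y-traces, whose value at instant k+1 depends only on the full history up to instant k and the x-value at instant k+1, and whose value at instant 0 depends only on the x-value at instant 0, satisfying the formula. -/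
/-- `∀x ∃y (G x ↔ y)` is not weak-behaviorally satisfiable: no
weak-behavioral Skolem function (output at 0 depends only on the input at 0;
output at k+1 depends only on the output history up to k and the input at k+1)
can witness it. -/
theorem not_weak_behavioral_sat_Gx_iff_y :
    ¬ ∃ θ : (ℕ → Bool) → (ℕ → Bool),
      (∀ π₁ π₂ : ℕ → Bool, π₁ 0 = π₂ 0 → θ π₁ 0 = θ π₂ 0) ∧
      (∀ π₁ π₂ : ℕ → Bool, ∀ k : ℕ,
        (∀ i ≤ k, θ π₁ i = θ π₂ i) → π₁ (k + 1) = π₂ (k + 1) →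
          θ π₁ (k + 1) = θ π₂ (k + 1)) ∧
      (∀ π : ℕ → Bool, (θ π 0 = true ↔ ∀ i : ℕ, π i = true)) := by
  rintro ⟨θ, h0, _, hsat⟩
  have h1 : θ (fun _ => true) 0 = true := (hsat _).2 (fun _ => rfl)
  have h2 : θ (fun i => decide (i = 0)) 0 = θ (fun _ => true) 0 := h0 _ _ (by simp)
  have h3 := (hsat (fun i => decide (i = 0))).1 (h2.trans h1) 1
  simp at h3
end

section
/- The QLTL formula ∃y ∀x (F x ↔ F y) is satisfiable under the weak-behavioral semantics: there exists a weak-behavioral Skolem function θ mapping x-traces to y-traces such that for every x-trace π, x eventually holds in π if and only if y eventually holds in θ(π). -/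
/-- `∃y ∀x (F x ↔ F y)` is weak-behaviorally satisfiable: there is
a function mapping x-traces to y-traces, whose value at 0 is fixed and whose
value at k+1 depends only on the x-history up to instant k, such that
x eventually holds iff y eventually holds. -/
theorem weak_behavioral_sat_Fx_iff_Fy :
    ∃ θ : (ℕ → Bool) → (ℕ → Bool),
      (∀ π₁ π₂ : ℕ → Bool, θ π₁ 0 = θ π₂ 0) ∧
      (∀ π₁ π₂ : ℕ → Bool, ∀ k : ℕ,
        (∀ i ≤ k, π₁ i = π₂ i) → θ π₁ (k + 1) = θ π₂ (k + 1)) ∧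
      (∀ π : ℕ → Bool, ((∃ i, π i = true) ↔ (∃ i, θ π i = true))) := by
  refine ⟨fun π n => match n with
    | 0 => false
    | k + 1 => decide (∃ i ≤ k, π i = true), ?_, ?_, ?_⟩
  · intro _ _; rfl
  · intro π₁ π₂ k h
    simp only [decide_eq_decide]
    constructor
    · rintro ⟨i, hi, hv⟩; exact ⟨i, hi, (h i hi) ▸ hv⟩
    · rintro ⟨i, hi, hv⟩; exact ⟨i, hi, (h i hi).symm ▸ hv⟩
  · intro π
    constructor
    · rintro ⟨i, hi⟩
      exact ⟨i + 1, by simp; exact ⟨i, le_refl _, hi⟩⟩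
    · rintro ⟨i, hi⟩
      cases i with
      | zero => simp at hi
      | succ k =>
        simp only [decide_eq_true_eq] at hi
        obtain ⟨j, _, hj⟩ := hi
        exact ⟨j, hj⟩
end

section
/- For QLTL formulas whose prefix contains no universal quantifier followed by an existential quantifier — specifically formulas in the fragments Π₀ (all-universal prefix), Σ₀ (all-existential prefix), and Σ₁ (prefix of form ∃Y ∀X) — behavioral satisfaction and Skolem (hence classic) satisfaction coincide: π ⊨_B φ iff π ⊨_S φ, for every interpretation π of the free variables, provided the formula also has no free variables contributing dependencies (F = ∅ for the Σ cases). -/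
section

variable {V : Type} [DecidableEq V] {F : Set V} {p : QPrefix V}

theorem dep_append_of_mem {y : V} :
    ∀ {p₁ : QPrefix V} (p₂ : QPrefix V), y ∈ p₁.map Prod.snd → dep (p₁ ++ p₂) y = dep p₁ y
  | [], _, hy => by simp at hy
  | (b, x) :: t, p₂, hy => by
      by_cases hxy : x = y
      · cases b <;> simp [dep, hxy]
      · have hyt : y ∈ t.map Prod.snd := by
          simpa [Ne.symm hxy] using hy
        cases b <;> simp [dep, hxy, dep_append_of_mem p₂ hyt]

theorem dep_eq_empty_of_forall_exists (y : V) :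
    ∀ {p : QPrefix V}, (∀ q ∈ p, q.1 = true) → dep p y = ∅
  | [], _ => rfl
  | (b, x) :: t, hall => by
      obtain rfl : b = true := hall _ List.mem_cons_self
      have ht := dep_eq_empty_of_forall_exists y fun q hq => hall q (List.mem_cons_of_mem _ hq)
      simp [dep, ht]

/-- With no dependencies, each existential component of a Skolem function is a constant trace. -/
theorem IsSkolem.isBehavioral {θ : (ℕ → Set V) → (ℕ → Set V)} (hθ : IsSkolem F p θ)
    (hdep : ∀ y ∈ exVars p, F ∪ dep p y = ∅) : IsBehavioral F p θ := by
  intro π₁ π₂ y hy k _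
  refine hθ π₁ π₂ y hy (fun i v hv => ?_) k
  simp [hdep y hy] at hv

theorem satB.satS {ψ : LTL V} {π : ℕ → Set V} (h : satB F p ψ π) : satS F p ψ π :=
  let ⟨θ, hS, _, hψ⟩ := h
  ⟨θ, hS, hψ⟩

theorem satB_iff_satS_of_isSkolem_imp_isBehavioral (ψ : LTL V) (π : ℕ → Set V)
    (h : ∀ θ, IsSkolem F p θ → IsBehavioral F p θ) : satB F p ψ π ↔ satS F p ψ π :=
  ⟨satB.satS, fun ⟨θ, hS, hψ⟩ => ⟨θ, hS, h θ hS, hψ⟩⟩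

end

theorem behavioral_iff_skolem_low_fragments_general {V : Type} [DecidableEq V]
    (p : QPrefix V) (ψ : LTL V) (F : Set V)
    (hfrag : (∀ q ∈ p, q.1 = false) ∨
      (F = ∅ ∧ ∃ p₁ p₂ : QPrefix V, p = p₁ ++ p₂ ∧
        (∀ q ∈ p₁, q.1 = true) ∧ (∀ q ∈ p₂, q.1 = false)))
    (π : ℕ → Set V) :
    satB F p ψ π ↔ satS F p ψ π := by
  refine satB_iff_satS_of_isSkolem_imp_isBehavioral ψ π fun θ hθ => hθ.isBehavioral ?_
  intro y hy
  rcases hfrag with hall | ⟨rfl, p₁, p₂, rfl, h₁, h₂⟩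
  · simpa using hall _ hy
  · have hy₁ : (true, y) ∈ p₁ := (List.mem_append.mp hy).resolve_right fun h => by
      simpa using h₂ _ h
    rw [dep_append_of_mem p₂ (List.mem_map_of_mem hy₁),
      dep_eq_empty_of_forall_exists y h₁, Set.empty_union]

/-- for the fragments Π₀ (all-universal prefix), Σ₀ (all-existential)
and Σ₁ (∃-block then ∀-block, with no free variables), behavioral and Skolem
(hence classic) satisfaction coincide. -/
theorem behavioral_iff_skolem_low_fragments {V : Type} [DecidableEq V]
    (p : QPrefix V) (ψ : LTL V) (F : Set V)
    (hnd : (p.map Prod.snd).Nodup)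
    (hfrag : (∀ q ∈ p, q.1 = false) ∨
      (F = ∅ ∧ ∃ p₁ p₂ : QPrefix V, p = p₁ ++ p₂ ∧
        (∀ q ∈ p₁, q.1 = true) ∧ (∀ q ∈ p₂, q.1 = false)))
    (π : ℕ → Set V) :
    satB F p ψ π ↔ satS F p ψ π :=
  behavioral_iff_skolem_low_fragments_general p ψ F hfrag π
end

section
/- There exists a closed QLTL formula φ such that under the behavioral semantics neither φ nor its (prenex) negation ¬φ is satisfiable; concretely φ = ∀x ∃y (G x ↔ y) works: φ is behaviorally unsatisfiable and ¬φ = ∃x ∀y ¬(G x ↔ y) is also behaviorally unsatisfiable. -/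
/-- under the behavioral semantics, neither
`φ = ∀x ∃y (G x ↔ y)` nor its prenex negation `¬φ = ∃x ∀y ¬(G x ↔ y)` is
satisfiable. For φ: no behavioral (prefix-dependent) choice of y works.
For ¬φ: the behavioral choice of the x-trace has empty dependency, hence is a
constant trace σ, and no σ defeats every y-trace. -/
theorem behavioral_neither_phi_nor_neg_phi :
    (¬ ∃ θ : (ℕ → Bool) → (ℕ → Bool),
      (∀ π₁ π₂ : ℕ → Bool, ∀ k : ℕ, (∀ i ≤ k, π₁ i = π₂ i) → θ π₁ k = θ π₂ k) ∧
      (∀ π : ℕ → Bool, (θ π 0 = true ↔ ∀ i : ℕ, π i = true))) ∧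
    (¬ ∃ σ : ℕ → Bool, ∀ τ : ℕ → Bool,
      ¬ ((∀ i : ℕ, σ i = true) ↔ τ 0 = true)) := by
  constructor
  · rintro ⟨θ, hbeh, hspec⟩
    set π₁ : ℕ → Bool := fun _ => true with hπ₁
    set π₂ : ℕ → Bool := fun i => if i = 0 then true else false with hπ₂
    have h0 : θ π₁ 0 = θ π₂ 0 := by
      apply hbeh
      intro i hi
      interval_cases i
      simp [hπ₁, hπ₂]
    have h1 : θ π₁ 0 = true := (hspec π₁).mpr (fun i => rfl)
    have h2 : θ π₂ 0 ≠ true := by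
      intro h
      have := (hspec π₂).mp h 1
      simp [hπ₂] at this
    exact h2 (h0 ▸ h1)
  · rintro ⟨σ, hσ⟩
    by_cases h : ∀ i, σ i = true
    · exact hσ (fun _ => true) ⟨fun _ => rfl, fun _ => h⟩
    · exact hσ (fun _ => false) ⟨fun hh => absurd hh h, fun hh => by simp at hh⟩
end
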